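/- arXiv:1302.4101 — 5 statements merged into one kernel-verified Lean document; each statement's English description precedes it below -/
import Mathlib

section
/- Let (X, d_X) and (Y, d_Y) be metric spaces equipped with their Borel σ-algebras, let G : X → Y be Borel measurable, and let b : [0,∞) → [0,∞) be monotone non-decreasing. Assume the deterministic stability estimate d_X(a₁, a₂) ≤ b(d_Y(G(a₁), G(a₂))) holds for all a₁, a₂ ∈ X. Then for every measure μ on X, every a† ∈ X and every ε ≥ 0 one has μ({a ∈ X : d_X(a, a†) ≤ b(ε)}) ≥ (G_*μ)({p ∈ Y : d_Y(p, G(a†)) ≤ ε}). -/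
open MeasureTheory Metric

theorem preimage_closedBall_subset_closedBall_of_stability
    {X Y : Type*} [PseudoMetricSpace X] [PseudoMetricSpace Y] {G : X → Y} {b : ℝ → ℝ}
    (hb_mono : MonotoneOn b (Set.Ici 0))
    (hstab : ∀ a₁ a₂ : X, dist a₁ a₂ ≤ b (dist (G a₁) (G a₂))) (x : X) {ε : ℝ} (hε : 0 ≤ ε) :
    G ⁻¹' closedBall (G x) ε ⊆ closedBall x (b ε) := fun a ha =>
  calc dist a x ≤ b (dist (G a) (G x)) := hstab a x
    _ ≤ b ε := hb_mono dist_nonneg hε ha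

theorem pushforward_ball_stability_general
    {X Y : Type*} [MetricSpace X] [MetricSpace Y]
    [MeasurableSpace X] [MeasurableSpace Y] [BorelSpace Y]
    (G : X → Y) (hG : Measurable G)
    (b : ℝ → ℝ)
    (hb_mono : MonotoneOn b (Set.Ici (0 : ℝ)))
    (hstab : ∀ a₁ a₂ : X, dist a₁ a₂ ≤ b (dist (G a₁) (G a₂)))
    (μ : Measure X) (adag : X) (ε : ℝ) (hε : 0 ≤ ε) :
    (μ.map G) {p : Y | dist p (G adag) ≤ ε} ≤ μ {a : X | dist a adag ≤ b ε} :=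
  calc μ.map G (closedBall (G adag) ε) = μ (G ⁻¹' closedBall (G adag) ε) :=
        Measure.map_apply hG measurableSet_closedBall
    _ ≤ μ (closedBall adag (b ε)) :=
        measure_mono (preimage_closedBall_subset_closedBall_of_stability hb_mono hstab adag hε)

/-- If the stability estimate `d_X(a₁,a₂) ≤ b(d_Y(G a₁, G a₂))` holds for a
monotone `b : [0,∞) → [0,∞)`, then for any measure `μ` on `X`, any `a† ∈ X` and any `ε ≥ 0`,
`μ {a | d(a,a†) ≤ b ε} ≥ (G_*μ) {p | d(p, G a†) ≤ ε}`. -/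
theorem pushforward_ball_stability
    {X Y : Type*} [MetricSpace X] [MetricSpace Y]
    [MeasurableSpace X] [BorelSpace X] [MeasurableSpace Y] [BorelSpace Y]
    (G : X → Y) (hG : Measurable G)
    (b : ℝ → ℝ)
    (hb_nonneg : ∀ x : ℝ, 0 ≤ x → 0 ≤ b x)
    (hb_mono : MonotoneOn b (Set.Ici (0 : ℝ)))
    (hstab : ∀ a₁ a₂ : X, dist a₁ a₂ ≤ b (dist (G a₁) (G a₂)))
    (μ : Measure X) (adag : X) (ε : ℝ) (hε : 0 ≤ ε) :
    (μ.map G) {p : Y | dist p (G adag) ≤ ε} ≤ μ {a : X | dist a adag ≤ b ε} :=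
  pushforward_ball_stability_general G hG b hb_mono hstab μ adag ε hε
end

section
/- Let E be a real separable Banach space, a₀ ∈ E, and (ψ_i)_{i≥1} a sequence in E with ‖ψ_i‖ ≤ 1 for all i. Let (γ_i)_{i≥1} be a non-increasing sequence of strictly positive reals such that ∑_{i≥1} γ_i^{ν̃} < ∞ for some ν̃ ∈ (0,1). Let μ₀ be the law on E of the random series a₀ + ∑_{i≥1} γ_i z_i ψ_i, where the z_i are independent and uniformly distributed on [−1,1]; that is, μ₀ is the pushforward of the countable product of uniform probability measures on [−1,1] under the map z ↦ a₀ + ∑_{i≥1} γ_i z_i ψ_i (the series converges absolutely since ∑ γ_i < ∞). Let z† ∈ [−1,1]^ℕ and a† = a₀ + ∑_{i≥1} γ_i z_i† ψ_i. Then for every ν with ν̃ < ν < 1 there exist C > 0 and ε₀ > 0 such that for all ε ∈ (0, ε₀): μ₀({a ∈ E : ‖a − a†‖ ≤ ε}) ≥ exp(−C·ε^{−ν/(1−ν)}). -/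
/-!
Confine the first `N` coordinates to `δ`-intervals around `z†`: this cylinder has probability
at least `(δ / 2) ^ N`, and on it `‖a - a†‖ ≤ δ ∑ γ_i + 2 ∑_{i ≥ N} γ_i`. Monotonicity and
`ν₀`-summability give `γ_N ≲ N ^ (-1 / ν₀)`, hence the tail bound
`∑_{i ≥ N} γ_i ≤ γ_N ^ (1 - ν₀) ∑ γ_i ^ ν₀ ≲ N ^ (-(1 - ν₀) / ν₀)`. Taking `δ ≍ ε` and
`N ≍ ε ^ (-ν₀ / (1 - ν₀))` puts the cylinder inside the `ε`-ball, and
`(δ / 2) ^ N = exp (-N log (2 / δ)) ≥ exp (-C ε ^ (-ν / (1 - ν)))`: the logarithm is absorbed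
by the gap `ν₀ < ν`.
-/

open MeasureTheory Set Finset Filter

theorem summable_of_summable_rpow {ι : Type*} {γ : ι → ℝ} {p : ℝ} (hγ : ∀ i, 0 ≤ γ i)
    (hp0 : 0 < p) (hp1 : p ≤ 1) (hs : Summable fun i => γ i ^ p) : Summable γ := by
  refine .of_norm_bounded_eventually hs ?_
  filter_upwards [hs.tendsto_cofinite_zero.eventually (gt_mem_nhds one_pos)] with i hi
  have hle : γ i ≤ 1 := by
    by_contra! h
    exact (Real.one_lt_rpow h hp0).not_gt hi
  rw [Real.norm_of_nonneg (hγ i)]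
  exact Real.self_le_rpow_of_le_one (hγ i) hle hp1

theorem Antitone.succ_mul_le_tsum {f : ℕ → ℝ} (hf : Antitone f) (hf0 : ∀ i, 0 ≤ f i)
    (hs : Summable f) (N : ℕ) : ((N : ℝ) + 1) * f N ≤ ∑' i, f i :=
  calc ((N : ℝ) + 1) * f N = ∑ _i ∈ range (N + 1), f N := by simp
    _ ≤ ∑ i ∈ range (N + 1), f i :=
      sum_le_sum fun i hi => hf (Nat.lt_succ_iff.mp (mem_range.mp hi))
    _ ≤ ∑' i, f i := hs.sum_le_tsum _ fun i _ => hf0 i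

section DecayingSequence

variable {γ : ℕ → ℝ} {p : ℝ}

theorem Antitone.le_rpow_div_succ (hγ : Antitone γ) (hγ0 : ∀ i, 0 ≤ γ i) (hp0 : 0 < p)
    (hs : Summable fun i => γ i ^ p) (N : ℕ) :
    γ N ≤ ((∑' i, γ i ^ p) / ((N : ℝ) + 1)) ^ p⁻¹ := by
  have hpow : γ N ^ p ≤ (∑' i, γ i ^ p) / ((N : ℝ) + 1) := by
    rw [le_div_iff₀ (by positivity), mul_comm]
    exact Antitone.succ_mul_le_tsum (fun i j hij => Real.rpow_le_rpow (hγ0 j) (hγ hij) hp0.le)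
      (fun i => Real.rpow_nonneg (hγ0 i) p) hs N
  calc γ N = (γ N ^ p) ^ p⁻¹ := (Real.rpow_rpow_inv (hγ0 N) hp0.ne').symm
    _ ≤ _ := Real.rpow_le_rpow (Real.rpow_nonneg (hγ0 N) p) hpow (inv_nonneg.mpr hp0.le)

theorem Antitone.tsum_nat_add_le (hγ : Antitone γ) (hγ0 : ∀ i, 0 ≤ γ i) (hp0 : 0 < p)
    (hp1 : p ≤ 1) (hs : Summable fun i => γ i ^ p) (N : ℕ) :
    ∑' i, γ (i + N) ≤ (∑' i, γ i ^ p) * ((∑' i, γ i ^ p) / ((N : ℝ) + 1)) ^ ((1 - p) / p) := by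
  set K := ∑' i, γ i ^ p
  have hK : 0 ≤ K := tsum_nonneg fun i => Real.rpow_nonneg (hγ0 i) p
  have hsN : Summable fun i => γ (i + N) ^ p := (summable_nat_add_iff N).mpr hs
  have hpoint : ∀ i, γ (i + N) ≤ γ N ^ (1 - p) * γ (i + N) ^ p := fun i => by
    calc γ (i + N) = γ (i + N) ^ (1 - p) * γ (i + N) ^ p := by
          rw [← Real.rpow_add' (hγ0 _) (by simp), sub_add_cancel, Real.rpow_one]
      _ ≤ _ := mul_le_mul_of_nonneg_right
          (Real.rpow_le_rpow (hγ0 _) (hγ (Nat.le_add_left N i)) (by linarith))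
          (Real.rpow_nonneg (hγ0 _) p)
  have htailp : ∑' i, γ (i + N) ^ p ≤ K :=
    (le_add_of_nonneg_left (sum_nonneg fun i _ => Real.rpow_nonneg (hγ0 i) p)).trans_eq
      (hs.sum_add_tsum_nat_add N)
  have hγN : γ N ^ (1 - p) ≤ (K / ((N : ℝ) + 1)) ^ ((1 - p) / p) := by
    calc γ N ^ (1 - p) ≤ ((K / ((N : ℝ) + 1)) ^ p⁻¹) ^ (1 - p) :=
          Real.rpow_le_rpow (hγ0 N) (hγ.le_rpow_div_succ hγ0 hp0 hs N) (by linarith)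
      _ = _ := by rw [← Real.rpow_mul (by positivity), inv_mul_eq_div]
  calc ∑' i, γ (i + N) ≤ ∑' i, γ N ^ (1 - p) * γ (i + N) ^ p :=
        ((summable_nat_add_iff N).mpr (summable_of_summable_rpow hγ0 hp0 hp1 hs)).tsum_le_tsum
          hpoint (hsN.mul_left _)
    _ = γ N ^ (1 - p) * ∑' i, γ (i + N) ^ p := tsum_mul_left
    _ ≤ (K / ((N : ℝ) + 1)) ^ ((1 - p) / p) * K :=
        mul_le_mul hγN htailp (tsum_nonneg fun i => Real.rpow_nonneg (hγ0 _) p) (by positivity)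
    _ = _ := mul_comm _ _

theorem Antitone.exists_tsum_nat_add_le (hγ : Antitone γ) (hγ0 : ∀ i, 0 ≤ γ i) (hp0 : 0 < p)
    (hp1 : p < 1) (hs : Summable fun i => γ i ^ p) :
    ∃ c > 0, ∀ ε, 0 < ε → ε ≤ 1 →
      ∃ N : ℕ, (N : ℝ) ≤ c * ε ^ (-(p / (1 - p))) ∧ ∑' i, γ (i + N) ≤ ε := by
  set K := ∑' i, γ i ^ p
  set r := p / (1 - p)
  have hK : 0 ≤ K := tsum_nonneg fun i => Real.rpow_nonneg (hγ0 i) p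
  have hr : 0 < r := div_pos hp0 (by linarith)
  refine ⟨K * K ^ r + 1, by positivity, fun ε hε hε1 => ⟨⌈K * (K / ε) ^ r⌉₊, ?_, ?_⟩⟩
  · have hε_rpow : 1 ≤ ε ^ (-r) :=
      Real.one_le_rpow_of_pos_of_le_one_of_nonpos hε hε1 (by linarith)
    calc (⌈K * (K / ε) ^ r⌉₊ : ℝ) ≤ K * (K / ε) ^ r + 1 := (Nat.ceil_lt_add_one (by positivity)).le
      _ = K * K ^ r * ε ^ (-r) + 1 := by
          rw [Real.div_rpow hK hε.le, Real.rpow_neg hε.le, div_eq_mul_inv, mul_assoc]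
      _ ≤ (K * K ^ r + 1) * ε ^ (-r) := by nlinarith [show 0 ≤ K * K ^ r by positivity]
  · set N := ⌈K * (K / ε) ^ r⌉₊
    refine (hγ.tsum_nat_add_le hγ0 hp0 hp1.le hs N).trans
      (?_ : K * (K / ((N : ℝ) + 1)) ^ ((1 - p) / p) ≤ ε)
    rcases hK.eq_or_lt with hK0 | hKpos
    · rw [← hK0, zero_mul]
      exact hε.le
    have hN : K / (ε / K) ^ r ≤ (N : ℝ) + 1 := by
      rw [div_eq_mul_inv, ← Real.inv_rpow (by positivity), inv_div]
      exact (Nat.le_ceil _).trans (by linarith)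
    have hbase : K / ((N : ℝ) + 1) ≤ (ε / K) ^ r := by
      rw [div_le_iff₀ (by positivity)]
      rwa [div_le_iff₀ (by positivity), mul_comm] at hN
    calc K * (K / ((N : ℝ) + 1)) ^ ((1 - p) / p) ≤ K * ((ε / K) ^ r) ^ r⁻¹ := by
          rw [show (1 - p) / p = r⁻¹ from (inv_div _ _).symm]
          gcongr
      _ = ε := by rw [Real.rpow_rpow_inv (by positivity) hr.ne', mul_div_cancel₀ _ hKpos.ne']

end DecayingSequence

theorem exists_exp_neg_rpow_le_div_pow {a c r₀ r : ℝ} (ha : 0 < a) (hc : 0 < c) (hr : r₀ < r) :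
    ∃ C > 0, ∀ (ε : ℝ) (N : ℕ), 0 < ε → ε ≤ 1 → (N : ℝ) ≤ c * ε ^ (-r₀) →
      Real.exp (-C * ε ^ (-r)) ≤ (ε / a) ^ N := by
  set η := r - r₀
  have hη : 0 < η := sub_pos.mpr hr
  refine ⟨c * (|Real.log a| + η⁻¹), by positivity, fun ε N hε hε1 hN => ?_⟩
  have hεη : 1 ≤ ε ^ (-η) := Real.one_le_rpow_of_pos_of_le_one_of_nonpos hε hε1 (by linarith)
  have hlog : Real.log (a / ε) ≤ (|Real.log a| + η⁻¹) * ε ^ (-η) := by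
    have h := Real.log_le_rpow_div (inv_nonneg.mpr hε.le) hη
    rw [Real.log_inv, Real.inv_rpow hε.le, ← Real.rpow_neg hε.le] at h
    rw [div_eq_inv_mul] at h
    have habs : Real.log a ≤ |Real.log a| * ε ^ (-η) :=
      (le_abs_self _).trans (le_mul_of_one_le_right (abs_nonneg _) hεη)
    rw [Real.log_div ha.ne' hε.ne', add_mul]
    linarith
  have hkey : (N : ℝ) * Real.log (a / ε) ≤ c * (|Real.log a| + η⁻¹) * ε ^ (-r) := by
    rcases le_total (Real.log (a / ε)) 0 with hneg | hpos
    · exact (mul_nonpos_of_nonneg_of_nonpos N.cast_nonneg hneg).trans (by positivity)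
    calc (N : ℝ) * Real.log (a / ε) ≤ (c * ε ^ (-r₀)) * ((|Real.log a| + η⁻¹) * ε ^ (-η)) :=
          mul_le_mul hN hlog hpos (by positivity)
      _ = c * (|Real.log a| + η⁻¹) * ε ^ (-r) := by
          rw [mul_mul_mul_comm, ← Real.rpow_add hε, show -r₀ + -η = -r by simp only [η]; ring]
  rw [← Real.exp_log (pow_pos (div_pos hε ha) N), Real.exp_le_exp, Real.log_pow,
    ← inv_div, Real.log_inv]
  linarith

def IsIidUniform (P : Measure (ℕ → ℝ)) : Prop :=
  ∀ (s : Finset ℕ) (B : ℕ → Set ℝ), (∀ i, MeasurableSet (B i)) →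
    P {z : ℕ → ℝ | ∀ i ∈ s, z i ∈ B i} = ∏ i ∈ s, ((2 : ENNReal)⁻¹ * volume (B i ∩ Icc (-1 : ℝ) 1))

theorem abs_sub_le_two_of_mem_Icc {x y : ℝ} (hx : x ∈ Icc (-1 : ℝ) 1)
    (hy : y ∈ Icc (-1 : ℝ) 1) : |x - y| ≤ 2 := by
  have h := Real.dist_le_of_mem_Icc hx hy
  rw [Real.dist_eq] at h
  linarith

theorem ofReal_le_volume_closedBall_inter_Icc {x δ : ℝ} (hx : x ∈ Icc (-1 : ℝ) 1)
    (hδ0 : 0 ≤ δ) (hδ2 : δ ≤ 2) :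
    ENNReal.ofReal δ ≤ volume (Metric.closedBall x δ ∩ Icc (-1 : ℝ) 1) := by
  rw [Real.closedBall_eq_Icc, Icc_inter_Icc, Real.volume_Icc]
  apply ENNReal.ofReal_le_ofReal
  obtain ⟨hx1, hx2⟩ := hx
  rcases le_total (x + δ) 1 with h | h <;> rcases le_total (x - δ) (-1) with h' | h' <;>
    simp only [min_eq_left, min_eq_right, max_eq_left, max_eq_right, h, h'] <;> linarith

namespace IsIidUniform

variable {P : Measure (ℕ → ℝ)}

theorem ae_mem_Icc (hP : IsIidUniform P) : ∀ᵐ z ∂P, ∀ i, z i ∈ Icc (-1 : ℝ) 1 := by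
  refine ae_all_iff.mpr fun i => ae_iff.mpr ?_
  simpa using hP {i} (fun _ => (Icc (-1 : ℝ) 1)ᶜ) fun _ => measurableSet_Icc.compl

theorem ofReal_pow_le_measure_cylinder (hP : IsIidUniform P) {x : ℕ → ℝ}
    (hx : ∀ i, x i ∈ Icc (-1 : ℝ) 1) {δ : ℝ} (hδ0 : 0 ≤ δ) (hδ2 : δ ≤ 2) (s : Finset ℕ) :
    ENNReal.ofReal ((δ / 2) ^ #s) ≤ P {z | ∀ i ∈ s, z i ∈ Metric.closedBall (x i) δ} := by
  rw [hP s _ fun _ => Metric.isClosed_closedBall.measurableSet,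
    ENNReal.ofReal_pow (by positivity), ← prod_const]
  refine prod_le_prod' fun i _ => ?_
  rw [ENNReal.ofReal_div_of_pos two_pos, ENNReal.ofReal_ofNat, ENNReal.div_eq_inv_mul]
  exact mul_le_mul_right (ofReal_le_volume_closedBall_inter_Icc (hx i) hδ0 hδ2) _

end IsIidUniform

theorem tsum_mul_le_head_add_tail {γ w : ℕ → ℝ} (hγ0 : ∀ i, 0 ≤ γ i) (hγ : Summable γ)
    (hw0 : ∀ i, 0 ≤ w i) {δ M : ℝ} (hδ : 0 ≤ δ) {N : ℕ} (hhead : ∀ i < N, w i ≤ δ)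
    (hM : ∀ i, w i ≤ M) : ∑' i, γ i * w i ≤ δ * ∑' i, γ i + M * ∑' i, γ (i + N) := by
  have hγw : Summable fun i => γ i * w i :=
    .of_nonneg_of_le (fun i => mul_nonneg (hγ0 i) (hw0 i))
      (fun i => mul_le_mul_of_nonneg_left (hM i) (hγ0 i)) (hγ.mul_right M)
  rw [← hγw.sum_add_tsum_nat_add N]
  gcongr
  · calc ∑ i ∈ range N, γ i * w i ≤ ∑ i ∈ range N, δ * γ i :=
          sum_le_sum fun i hi => by
            rw [mul_comm δ]; exact mul_le_mul_of_nonneg_left (hhead i (mem_range.mp hi)) (hγ0 i)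
      _ = δ * ∑ i ∈ range N, γ i := (mul_sum ..).symm
      _ ≤ δ * ∑' i, γ i := mul_le_mul_of_nonneg_left (hγ.sum_le_tsum _ fun i _ => hγ0 i) hδ
  · rw [mul_comm M, ← tsum_mul_right]
    exact ((summable_nat_add_iff N).mpr hγw).tsum_le_tsum
      (fun i => mul_le_mul_of_nonneg_left (hM _) (hγ0 _))
      (((summable_nat_add_iff N).mpr hγ).mul_right M)

section RandomSeries

variable {E : Type*} [NormedAddCommGroup E] [NormedSpace ℝ E]

noncomputable def randomSeries (a₀ : E) (γ : ℕ → ℝ) (ψ : ℕ → E) (z : ℕ → ℝ) : E :=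
  a₀ + ∑' i, (γ i * z i) • ψ i

variable {a₀ : E} {γ : ℕ → ℝ} {ψ : ℕ → E}

theorem norm_smul_le_mul_abs (hγ0 : ∀ i, 0 ≤ γ i) (hψ : ∀ i, ‖ψ i‖ ≤ 1) (z : ℕ → ℝ) (i : ℕ) :
    ‖(γ i * z i) • ψ i‖ ≤ γ i * |z i| := by
  rw [norm_smul, Real.norm_eq_abs, abs_mul, abs_of_nonneg (hγ0 i)]
  exact mul_le_of_le_one_right (mul_nonneg (hγ0 i) (abs_nonneg _)) (hψ i)

theorem summable_norm_smul_of_mem_Icc (hγ0 : ∀ i, 0 ≤ γ i) (hγ : Summable γ)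
    (hψ : ∀ i, ‖ψ i‖ ≤ 1) {z : ℕ → ℝ} (hz : ∀ i, z i ∈ Icc (-1 : ℝ) 1) :
    Summable fun i => ‖(γ i * z i) • ψ i‖ :=
  .of_nonneg_of_le (fun _ => norm_nonneg _)
    (fun i => (norm_smul_le_mul_abs hγ0 hψ z i).trans
      (mul_le_of_le_one_right (hγ0 i) (abs_le.mpr (hz i))))
    hγ

theorem norm_randomSeries_sub_le [CompleteSpace E] (hγ0 : ∀ i, 0 ≤ γ i) (hγ : Summable γ)
    (hψ : ∀ i, ‖ψ i‖ ≤ 1) {z z' : ℕ → ℝ} (hz : ∀ i, z i ∈ Icc (-1 : ℝ) 1)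
    (hz' : ∀ i, z' i ∈ Icc (-1 : ℝ) 1) :
    ‖randomSeries a₀ γ ψ z - randomSeries a₀ γ ψ z'‖ ≤ ∑' i, γ i * |z i - z' i| := by
  have hdiff : randomSeries a₀ γ ψ z - randomSeries a₀ γ ψ z'
      = ∑' i, (γ i * (z i - z' i)) • ψ i := by
    rw [randomSeries, randomSeries, add_sub_add_left_eq_sub,
      ← (summable_norm_smul_of_mem_Icc hγ0 hγ hψ hz).of_norm.tsum_sub
        (summable_norm_smul_of_mem_Icc hγ0 hγ hψ hz').of_norm]
    simp only [mul_sub, sub_smul]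
  have hsum : Summable fun i => γ i * |z i - z' i| :=
    .of_nonneg_of_le (fun i => mul_nonneg (hγ0 i) (abs_nonneg _))
      (fun i => mul_le_mul_of_nonneg_left (abs_sub_le_two_of_mem_Icc (hz i) (hz' i)) (hγ0 i))
      (hγ.mul_right 2)
  have hnorm : Summable fun i => ‖(γ i * (z i - z' i)) • ψ i‖ :=
    hsum.of_nonneg_of_le (fun _ => norm_nonneg _) (norm_smul_le_mul_abs hγ0 hψ _)
  rw [hdiff]
  exact (norm_tsum_le_tsum_norm hnorm).trans
    (hnorm.tsum_le_tsum (norm_smul_le_mul_abs hγ0 hψ _) hsum)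

theorem aemeasurable_randomSeries [MeasurableSpace E] [BorelSpace E] {P : Measure (ℕ → ℝ)}
    (h : ∀ᵐ z ∂P, Summable fun i => (γ i * z i) • ψ i) :
    AEMeasurable (randomSeries a₀ γ ψ) P := by
  refine aemeasurable_of_tendsto_metrizable_ae atTop
    (f := fun n z => a₀ + ∑ i ∈ range n, (γ i * z i) • ψ i) (fun n => ?_) ?_
  · exact (continuous_const.add (continuous_finsetSum _ fun i _ =>
      (continuous_const.mul (continuous_apply i)).smul continuous_const)).measurable.aemeasurable
  · filter_upwards [h] with z hz
    exact hz.hasSum.tendsto_sum_nat.const_add a₀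

end RandomSeries

theorem IsIidUniform.ofReal_pow_le_map_closedBall {E : Type*} [NormedAddCommGroup E]
    [NormedSpace ℝ E] [CompleteSpace E] [MeasurableSpace E] [BorelSpace E]
    {P : Measure (ℕ → ℝ)} (hP : IsIidUniform P) (a₀ : E) {γ : ℕ → ℝ} (hγ0 : ∀ i, 0 ≤ γ i)
    (hγ : Summable γ) {ψ : ℕ → E} (hψ : ∀ i, ‖ψ i‖ ≤ 1) {x : ℕ → ℝ}
    (hx : ∀ i, x i ∈ Icc (-1 : ℝ) 1) {δ ε : ℝ} (hδ0 : 0 ≤ δ) (hδ2 : δ ≤ 2) (N : ℕ)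
    (hε : δ * ∑' i, γ i + 2 * ∑' i, γ (i + N) ≤ ε) :
    ENNReal.ofReal ((δ / 2) ^ N)
      ≤ P.map (randomSeries a₀ γ ψ) (Metric.closedBall (randomSeries a₀ γ ψ x) ε) := by
  have hcyl := hP.ofReal_pow_le_measure_cylinder hx hδ0 hδ2 (range N)
  rw [card_range] at hcyl
  refine hcyl.trans ((measure_mono_ae ?_).trans (Measure.le_map_apply
    (aemeasurable_randomSeries ?_) _))
  · filter_upwards [hP.ae_mem_Icc]
      with z hz (hzN : ∀ i ∈ range N, z i ∈ Metric.closedBall (x i) δ)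
    change randomSeries a₀ γ ψ z ∈ Metric.closedBall _ ε
    rw [mem_closedBall_iff_norm]
    refine (norm_randomSeries_sub_le hγ0 hγ hψ hz hx).trans (le_trans ?_ hε)
    refine tsum_mul_le_head_add_tail hγ0 hγ (fun i => abs_nonneg _) hδ0 (fun i hi => ?_)
      (fun i => abs_sub_le_two_of_mem_Icc (hz i) (hx i))
    rw [← Real.dist_eq]
    exact hzN i (mem_range.mpr hi)
  · filter_upwards [hP.ae_mem_Icc] with z hz
    exact (summable_norm_smul_of_mem_Icc hγ0 hγ hψ hz).of_norm

theorem uniform_prior_small_ball_general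
    {E : Type*} [NormedAddCommGroup E] [NormedSpace ℝ E] [CompleteSpace E]
    [MeasurableSpace E] [BorelSpace E]
    (a₀ : E) (ψ : ℕ → E) (hψ : ∀ i, ‖ψ i‖ ≤ 1)
    (γ : ℕ → ℝ) (hγ_pos : ∀ i, 0 < γ i) (hγ_anti : Antitone γ)
    (ν₀ : ℝ) (hν₀ : ν₀ ∈ Set.Ioo (0 : ℝ) 1)
    (hγ_sum : Summable (fun i => γ i ^ ν₀))
    (P : Measure (ℕ → ℝ))
    (hP : ∀ (s : Finset ℕ) (B : ℕ → Set ℝ), (∀ i, MeasurableSet (B i)) →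
      P {z : ℕ → ℝ | ∀ i ∈ s, z i ∈ B i}
        = ∏ i ∈ s, ((2 : ENNReal)⁻¹ * volume (B i ∩ Set.Icc (-1 : ℝ) 1)))
    (μ₀ : Measure E)
    (hμ₀ : μ₀ = P.map (fun z : ℕ → ℝ => a₀ + ∑' i : ℕ, (γ i * z i) • ψ i))
    (zdag : ℕ → ℝ) (hzdag : ∀ i, zdag i ∈ Set.Icc (-1 : ℝ) 1)
    (adag : E) (hadag : adag = a₀ + ∑' i : ℕ, (γ i * zdag i) • ψ i) :
    ∀ ν : ℝ, ν₀ < ν → ν < 1 →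
      ∃ C : ℝ, 0 < C ∧ ∃ ε₀ : ℝ, 0 < ε₀ ∧ ∀ ε : ℝ, 0 < ε → ε < ε₀ →
        ENNReal.ofReal (Real.exp (-C * ε ^ (-(ν / (1 - ν)))))
          ≤ μ₀ {a : E | ‖a - adag‖ ≤ ε} := by
  intro ν hν₀ν hν1
  obtain ⟨hν₀0, hν₀1⟩ := hν₀
  subst hμ₀ hadag
  have hγ0 : ∀ i, 0 ≤ γ i := fun i => (hγ_pos i).le
  have hγ : Summable γ := summable_of_summable_rpow hγ0 hν₀0 hν₀1.le hγ_sum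
  have hS : 0 < ∑' i, γ i := hγ.tsum_pos hγ0 0 (hγ_pos 0)
  set r₀ := ν₀ / (1 - ν₀)
  obtain ⟨c, hc, htail⟩ := hγ_anti.exists_tsum_nat_add_le hγ0 hν₀0 hν₀1 hγ_sum
  obtain ⟨C, hC, hexp⟩ := exists_exp_neg_rpow_le_div_pow (a := 4 * ∑' i, γ i)
    (c := c / 4 ^ (-r₀)) (by positivity) (by positivity)
    (show r₀ < ν / (1 - ν) by rw [div_lt_div_iff₀ (by linarith) (by linarith)]; nlinarith)
  refine ⟨C, hC, min 1 (4 * ∑' i, γ i), by positivity, fun ε hε hεlt => ?_⟩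
  have hε1 : ε < 1 := hεlt.trans_le (min_le_left _ _)
  have hεS : ε < 4 * ∑' i, γ i := hεlt.trans_le (min_le_right _ _)
  obtain ⟨N, hN, hNtail⟩ := htail (ε / 4) (by positivity) (by linarith)
  set δ := ε / (2 * ∑' i, γ i)
  have hδ2 : δ ≤ 2 := by rw [div_le_iff₀ (by positivity)]; linarith
  have hradius : δ * ∑' i, γ i + 2 * ∑' i, γ (i + N) ≤ ε := by
    have : δ * ∑' i, γ i = ε / 2 := by simp only [δ]; field_simp
    linarith
  have hN' : (N : ℝ) ≤ c / 4 ^ (-r₀) * ε ^ (-r₀) :=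
    hN.trans_eq (by rw [Real.div_rpow hε.le (by norm_num)]; ring)
  have hδN : (δ / 2) ^ N = (ε / (4 * ∑' i, γ i)) ^ N := by
    rw [div_div]; ring_nf
  have hball : {a : E | ‖a - randomSeries a₀ γ ψ zdag‖ ≤ ε}
      = Metric.closedBall (randomSeries a₀ γ ψ zdag) ε :=
    Set.ext fun _ => mem_closedBall_iff_norm.symm
  calc ENNReal.ofReal (Real.exp (-C * ε ^ (-(ν / (1 - ν)))))
      ≤ ENNReal.ofReal ((δ / 2) ^ N) :=
        ENNReal.ofReal_le_ofReal (hδN ▸ hexp ε N hε hε1.le hN')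
    _ ≤ _ := hball ▸ (show IsIidUniform P from hP).ofReal_pow_le_map_closedBall a₀ hγ0 hγ hψ
        hzdag (by positivity) hδ2 N hradius

/-- Small ball probabilities for the uniform prior: if
`μ₀` is the law of the random series `a₀ + ∑ γ_i z_i ψ_i` with `z_i` i.i.d. uniform on `[-1,1]`
(the product measure `P` is characterized via its finite-dimensional cylinder probabilities),
`‖ψ_i‖ ≤ 1`, `γ` non-increasing, positive and `ν₀`-summable for some `ν₀ ∈ (0,1)`, and
`a† = a₀ + ∑ γ_i z†_i ψ_i` with `z† ∈ [-1,1]^ℕ`, then for every `ν₀ < ν < 1`,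
`μ₀ (ball_ε a†) ≥ exp(-C ε^{-ν/(1-ν)})` for all sufficiently small `ε > 0`. -/
theorem uniform_prior_small_ball
    {E : Type*} [NormedAddCommGroup E] [NormedSpace ℝ E] [CompleteSpace E]
    [SecondCountableTopology E] [MeasurableSpace E] [BorelSpace E]
    (a₀ : E) (ψ : ℕ → E) (hψ : ∀ i, ‖ψ i‖ ≤ 1)
    (γ : ℕ → ℝ) (hγ_pos : ∀ i, 0 < γ i) (hγ_anti : Antitone γ)
    (ν₀ : ℝ) (hν₀ : ν₀ ∈ Set.Ioo (0 : ℝ) 1)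
    (hγ_sum : Summable (fun i => γ i ^ ν₀))
    (P : Measure (ℕ → ℝ)) [IsProbabilityMeasure P]
    (hP : ∀ (s : Finset ℕ) (B : ℕ → Set ℝ), (∀ i, MeasurableSet (B i)) →
      P {z : ℕ → ℝ | ∀ i ∈ s, z i ∈ B i}
        = ∏ i ∈ s, ((2 : ENNReal)⁻¹ * volume (B i ∩ Set.Icc (-1 : ℝ) 1)))
    (μ₀ : Measure E)
    (hμ₀ : μ₀ = P.map (fun z : ℕ → ℝ => a₀ + ∑' i : ℕ, (γ i * z i) • ψ i))
    (zdag : ℕ → ℝ) (hzdag : ∀ i, zdag i ∈ Set.Icc (-1 : ℝ) 1)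
    (adag : E) (hadag : adag = a₀ + ∑' i : ℕ, (γ i * zdag i) • ψ i) :
    ∀ ν : ℝ, ν₀ < ν → ν < 1 →
      ∃ C : ℝ, 0 < C ∧ ∃ ε₀ : ℝ, 0 < ε₀ ∧ ∀ ε : ℝ, 0 < ε → ε < ε₀ →
        ENNReal.ofReal (Real.exp (-C * ε ^ (-(ν / (1 - ν)))))
          ≤ μ₀ {a : E | ‖a - adag‖ ≤ ε} :=
  uniform_prior_small_ball_general a₀ ψ hψ γ hγ_pos hγ_anti ν₀ hν₀ hγ_sum P hP μ₀ hμ₀ zdag hzdag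
    adag hadag
end

section
/- The ratio of convergent series ( ∑_{k=1}^∞ exp(−n/(2k) − 2k²) ) / ( ∑_{k=1}^∞ exp(−n/(8k) − k²) ) tends to 0 as n → ∞. -/
/-! Writing `m = k + 1`, the exponents satisfy
`n/(2m) + 2m² = (n/(8m) + m²) + (3n/(8m) + m²)` and `3n/(8m) + m² ≥ √(3n/8)` for `m ≥ 1`,
so every term of the numerator is at most `exp (-√(3n/8))` times the matching term of the
denominator. -/

open Filter Real

lemma sqrt_le_div_add_sq {a m : ℝ} (ha : 0 ≤ a) (hm : 1 ≤ m) : √a ≤ a / m + m ^ 2 := by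
  have hdiv : 0 ≤ a / m := by positivity
  rcases le_total m √a with h | h
  · have : √a ≤ a / m := by
      rw [le_div_iff₀ (by linarith)]
      nlinarith [sq_sqrt ha, sqrt_nonneg a]
    nlinarith
  · nlinarith

lemma tsum_le_mul_tsum_of_le_mul {ι : Type*} {f g : ι → ℝ} {c : ℝ} (hf : ∀ i, 0 ≤ f i)
    (hg : Summable g) (hfg : ∀ i, f i ≤ c * g i) : ∑' i, f i ≤ c * ∑' i, g i := by
  rw [← tsum_mul_left]
  exact (Summable.of_nonneg_of_le hf hfg (hg.mul_left c)).tsum_le_tsum hfg (hg.mul_left c)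

lemma summable_exp_neg_div_sub_sq {b c : ℝ} (hb : 0 ≤ b) (hc : 0 ≤ c) :
    Summable fun k : ℕ => exp (-b / (c * ((k : ℝ) + 1)) - ((k : ℝ) + 1) ^ 2) := by
  refine Summable.of_nonneg_of_le (fun _ => (exp_pos _).le) (fun k => ?_) summable_exp_neg_nat
  have hdiv : -b / (c * ((k : ℝ) + 1)) ≤ 0 :=
    div_nonpos_of_nonpos_of_nonneg (by linarith) (by positivity)
  rw [exp_le_exp]
  nlinarith [(Nat.cast_nonneg k : (0 : ℝ) ≤ k)]

lemma exp_neg_div_two_sub_two_mul_sq_le {x m : ℝ} (hx : 0 ≤ x) (hm : 1 ≤ m) :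
    exp (-x / (2 * m) - 2 * m ^ 2) ≤ exp (-√(3 * x / 8)) * exp (-x / (8 * m) - m ^ 2) := by
  have hsplit : -x / (2 * m) = -(3 * x / 8 / m) + -x / (8 * m) := by
    field_simp
    ring
  rw [← exp_add, exp_le_exp, hsplit]
  linarith [sqrt_le_div_add_sq (by positivity : 0 ≤ 3 * x / 8) hm]

/-- The ratio of convergent series
`(∑_{k≥1} exp(-n/(2k) - 2k²)) / (∑_{k≥1} exp(-n/(8k) - k²))` tends to `0` as `n → ∞`. -/
theorem ratio_of_series_tendsto_zero :
    Tendsto (fun n : ℕ =>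
        (∑' k : ℕ, Real.exp (-(n : ℝ) / (2 * ((k : ℝ) + 1)) - 2 * ((k : ℝ) + 1) ^ 2))
          / (∑' k : ℕ, Real.exp (-(n : ℝ) / (8 * ((k : ℝ) + 1)) - ((k : ℝ) + 1) ^ 2)))
      atTop (nhds 0) := by
  have hbound : Tendsto (fun n : ℕ => exp (-√(3 * (n : ℝ) / 8))) atTop (nhds 0) :=
    tendsto_exp_atBot.comp <| tendsto_neg_atTop_atBot.comp <| tendsto_sqrt_atTop.comp <|
      (tendsto_natCast_atTop_atTop.const_mul_atTop (by norm_num : (0 : ℝ) < 3)).atTop_div_const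
        (by norm_num)
  refine squeeze_zero (fun n => div_nonneg (tsum_nonneg fun _ => (exp_pos _).le)
    (tsum_nonneg fun _ => (exp_pos _).le)) (fun n => ?_) hbound
  have hden := summable_exp_neg_div_sub_sq (Nat.cast_nonneg n) (by norm_num : (0 : ℝ) ≤ 8)
  rw [div_le_iff₀ (hden.tsum_pos (fun _ => (exp_pos _).le) 0 (exp_pos _))]
  exact tsum_le_mul_tsum_of_le_mul (fun _ => (exp_pos _).le) hden fun k =>
    exp_neg_div_two_sub_two_mul_sq_le (Nat.cast_nonneg n) (by linarith [k.cast_nonneg (α := ℝ)])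
end

section
/- Let β ∈ (0,1], L > 0, K > 0, ε > 0, and set Δx = (ε/(4L))^{1/β}; assume Δx ≤ 1. Let h : [0,1] → ℝ be continuous with |h(x) − h(y)| ≤ 2L·|x − y|^β for all x, y ∈ [0,1] and with sup_{x∈[0,1]} |h(x)| ≥ ε. Let (x_i)_{i≥1} be a sequence in [0,1] such that for every n ≥ 1 and all 0 ≤ u < v ≤ 1 with v − u ≥ 1/(Kn), there exists i ∈ {1,…,n} with x_i ∈ (u,v). Then for every n ≥ 1 with K·n·Δx ≥ 1 one has ∑_{i=1}^n h(x_i)² ≥ ε²·K·n·Δx/8. -/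
/-!
Take a point `t` where `|h|` attains its maximum, so `|h t| ≥ ε`. The Hölder bound gives
`|h| ≥ ε / 2` within distance `Δx` of `t`, since `2L Δx^β = ε / 2`, and some interval of length
`Δx` around `t` fits in `[0, 1]`. Cut it into `⌊K n Δx⌋₊ ≥ K n Δx / 2` pieces of length at least
`1 / (K n)`; each piece holds a distinct design point of index at most `n`, and each such point
contributes at least `ε² / 4` to the sum.
-/

open Finset

lemma exists_le_of_le_sSup_image {α : Type*} [TopologicalSpace α] {s : Set α} {f : α → ℝ}
    {a : ℝ} (hs : IsCompact s) (hne : s.Nonempty) (hf : ContinuousOn f s)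
    (ha : a ≤ sSup (f '' s)) : ∃ t ∈ s, a ≤ f t := by
  obtain ⟨t, ht, hft⟩ := (hs.image_of_continuousOn hf).sSup_mem (hne.image f)
  exact ⟨t, ht, hft ▸ ha⟩

lemma half_le_abs_of_holder {s : Set ℝ} {h : ℝ → ℝ} {C β ε δ t y : ℝ} (hβ : 0 < β)
    (hC : 0 ≤ C) (hhold : ∀ x ∈ s, ∀ y ∈ s, |h x - h y| ≤ C * |x - y| ^ β)
    (ht : t ∈ s) (hy : y ∈ s) (hεt : ε ≤ |h t|) (hδ : C * δ ^ β ≤ ε / 2)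
    (hyt : |y - t| ≤ δ) : ε / 2 ≤ |h y| := by
  have hpow : |t - y| ^ β ≤ δ ^ β :=
    Real.rpow_le_rpow (abs_nonneg _) (abs_sub_comm t y ▸ hyt) hβ.le
  have hdiff : |h t| - |h y| ≤ C * δ ^ β :=
    calc |h t| - |h y| ≤ |h t - h y| := abs_sub_abs_le_abs_sub _ _
      _ ≤ C * |t - y| ^ β := hhold t ht y hy
      _ ≤ C * δ ^ β := mul_le_mul_of_nonneg_left hpow hC
  linarith

lemma exists_Icc_add_subset_Icc_of_mem {a b t δ : ℝ} (ht : t ∈ Set.Icc a b) (hδ : 0 ≤ δ)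
    (hδb : δ ≤ b - a) : ∃ u, a ≤ u ∧ u + δ ≤ b ∧ t ∈ Set.Icc u (u + δ) := by
  refine ⟨min t (b - δ), le_min ht.1 (by linarith), by linarith [min_le_right t (b - δ)],
    min_le_left _ _, ?_⟩
  rcases le_total t (b - δ) with htb | htb
  · rw [min_eq_left htb]; linarith
  · rw [min_eq_right htb]; linarith [ht.2]

lemma half_le_natFloor {R : Type*} [Field R] [LinearOrder R] [IsStrictOrderedRing R]
    [FloorSemiring R] {r : R} (hr : 1 ≤ r) : r / 2 ≤ ⌊r⌋₊ := by
  have hfloor : r - 1 < ⌊r⌋₊ := Nat.sub_one_lt_floor r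
  have hone : (1 : R) ≤ ⌊r⌋₊ := by exact_mod_cast Nat.le_floor (by exact_mod_cast hr)
  rcases le_total r 2 with h2 | h2 <;> linarith

/-- Cutting `(u, u + Δ)` into `m` pieces of length `Δ / m ≥ ℓ` gives one point per piece, and
points from distinct pieces are distinct. -/
lemma le_card_filter_mem_Ioo_of_cover {S : Finset ℕ} {x : ℕ → ℝ} {u Δ ℓ : ℝ} {m : ℕ}
    (hΔ : 0 < Δ) (hm : m * ℓ ≤ Δ)
    (hcover : ∀ v w, u ≤ v → v < w → w ≤ u + Δ → ℓ ≤ w - v → ∃ i ∈ S, x i ∈ Set.Ioo v w) :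
    m ≤ #{i ∈ S | x i ∈ Set.Ioo u (u + Δ)} := by
  rcases Nat.eq_zero_or_pos m with rfl | hm0
  · exact Nat.zero_le _
  set d := Δ / m with hd_def
  have hmR : (0 : ℝ) < m := by exact_mod_cast hm0
  have hd : 0 < d := by positivity
  have hℓd : ℓ ≤ d := by rw [le_div_iff₀ hmR]; linarith
  have hmd : m * d = Δ := by rw [hd_def]; field_simp
  have hpiece : ∀ j : Fin m, ∃ i ∈ S, x i ∈ Set.Ioo (u + j * d) (u + j * d + d) := by
    intro j
    have hj : ((j : ℕ) : ℝ) + 1 ≤ m := by exact_mod_cast j.2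
    have hjd : (j : ℝ) * d + d ≤ Δ := by nlinarith
    exact hcover _ _ (le_add_of_nonneg_right (by positivity)) (by linarith) (by linarith) (by linarith)
  choose f hfS hfx using hpiece
  have hmono : StrictMono (x ∘ f) := by
    intro j j' hjj'
    have hj : ((j : ℕ) : ℝ) + 1 ≤ (j' : ℕ) := by exact_mod_cast hjj'
    calc x (f j) < u + j * d + d := (hfx j).2
      _ ≤ u + j' * d := by nlinarith
      _ < x (f j') := (hfx j').1
  have hmaps : Set.MapsTo f (univ : Finset (Fin m))
      ({i ∈ S | x i ∈ Set.Ioo u (u + Δ)} : Finset ℕ) := by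
    intro j _
    have hj : ((j : ℕ) : ℝ) + 1 ≤ m := by exact_mod_cast j.2
    have hjd : (j : ℝ) * d + d ≤ Δ := by nlinarith
    have hj0 : (0 : ℝ) ≤ j * d := by positivity
    rw [mem_coe, mem_filter]
    exact ⟨hfS j, by linarith [(hfx j).1], by linarith [(hfx j).2]⟩
  simpa using card_le_card_of_injOn f hmaps hmono.injective.of_comp.injOn

theorem misfit_lower_bound_general
    (β L K ε : ℝ) (hβ : β ∈ Set.Ioc (0 : ℝ) 1) (hL : 0 < L) (hK : 0 < K) (hε : 0 < ε)
    (hΔx : (ε / (4 * L)) ^ (1 / β) ≤ 1)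
    (h : ℝ → ℝ) (hcont : ContinuousOn h (Set.Icc (0 : ℝ) 1))
    (hhold : ∀ x ∈ Set.Icc (0 : ℝ) 1, ∀ y ∈ Set.Icc (0 : ℝ) 1,
      |h x - h y| ≤ 2 * L * |x - y| ^ β)
    (hsup : ε ≤ sSup ((fun t => |h t|) '' Set.Icc (0 : ℝ) 1))
    (x : ℕ → ℝ)
    (hdesign : ∀ n : ℕ, 1 ≤ n → ∀ u v : ℝ, 0 ≤ u → u < v → v ≤ 1 →
      1 / (K * n) ≤ v - u → ∃ i ∈ Finset.Icc 1 n, x i ∈ Set.Ioo u v) :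
    ∀ n : ℕ, 1 ≤ n → 1 ≤ K * n * (ε / (4 * L)) ^ (1 / β) →
      ε ^ 2 * K * n * (ε / (4 * L)) ^ (1 / β) / 8 ≤
        ∑ i ∈ Finset.Icc 1 n, h (x i) ^ 2 := by
  intro n hn hKn
  set Δx := (ε / (4 * L)) ^ (1 / β) with hΔx_def
  have hΔx0 : 0 < Δx := by positivity
  have hΔxβ : 2 * L * Δx ^ β ≤ ε / 2 := by
    rw [hΔx_def, one_div, Real.rpow_inv_rpow (by positivity) hβ.1.ne']
    field_simp; linarith
  obtain ⟨t, ht, hεt⟩ := exists_le_of_le_sSup_image isCompact_Icc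
    (Set.nonempty_Icc.2 zero_le_one) hcont.abs hsup
  obtain ⟨u, hu0, hu1, htu⟩ := exists_Icc_add_subset_Icc_of_mem ht hΔx0.le (by linarith)
  set near := {i ∈ Icc 1 n | x i ∈ Set.Ioo u (u + Δx)}
  have hlarge : ∀ i ∈ near, ε ^ 2 / 4 ≤ h (x i) ^ 2 := by
    intro i hi
    obtain ⟨-, hxl, hxr⟩ := mem_filter.1 hi
    have hhalf := half_le_abs_of_holder hβ.1 (by positivity) hhold ht
      ⟨by linarith, by linarith⟩ hεt hΔxβ (abs_le.2 ⟨by linarith [htu.2], by linarith [htu.1]⟩)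
    nlinarith [sq_abs (h (x i))]
  have hcount : ⌊K * n * Δx⌋₊ ≤ #near := by
    refine le_card_filter_mem_Ioo_of_cover (ℓ := 1 / (K * n)) hΔx0 ?_
      fun v w hv hvw hw hl => hdesign n hn v w (by linarith) hvw (by linarith) hl
    rw [mul_one_div, div_le_iff₀ (by positivity)]
    linarith [Nat.floor_le (by positivity : 0 ≤ K * n * Δx)]
  calc ε ^ 2 * K * n * Δx / 8 = ε ^ 2 / 4 * (K * n * Δx / 2) := by ring
    _ ≤ ε ^ 2 / 4 * #near := by
      gcongr
      exact (half_le_natFloor hKn).trans (by exact_mod_cast hcount)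
    _ = #near • (ε ^ 2 / 4) := by rw [nsmul_eq_mul, mul_comm]
    _ ≤ ∑ i ∈ near, h (x i) ^ 2 := card_nsmul_le_sum _ _ _ hlarge
    _ ≤ ∑ i ∈ Icc 1 n, h (x i) ^ 2 :=
      sum_le_sum_of_subset_of_nonneg (filter_subset _ _) fun _ _ _ => sq_nonneg _

/-- Quantitative lower bound on the data misfit: if `h` is continuous on
`[0,1]`, satisfies `|h(x)-h(y)| ≤ 2L|x-y|^β`, has sup norm at least `ε`, and the design
points are such that every interval of length at least `1/(Kn)` contains one of the first
`n` points, then `∑_{i=1}^n h(x_i)² ≥ ε²·K·n·Δx/8` where `Δx = (ε/(4L))^{1/β}`, provided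
`Δx ≤ 1` and `K·n·Δx ≥ 1`. -/
theorem misfit_lower_bound
    (β L K ε : ℝ) (hβ : β ∈ Set.Ioc (0 : ℝ) 1) (hL : 0 < L) (hK : 0 < K) (hε : 0 < ε)
    (hΔx : (ε / (4 * L)) ^ (1 / β) ≤ 1)
    (h : ℝ → ℝ) (hcont : ContinuousOn h (Set.Icc (0 : ℝ) 1))
    (hhold : ∀ x ∈ Set.Icc (0 : ℝ) 1, ∀ y ∈ Set.Icc (0 : ℝ) 1,
      |h x - h y| ≤ 2 * L * |x - y| ^ β)
    (hsup : ε ≤ sSup ((fun t => |h t|) '' Set.Icc (0 : ℝ) 1))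
    (x : ℕ → ℝ) (hx : ∀ i, x i ∈ Set.Icc (0 : ℝ) 1)
    (hdesign : ∀ n : ℕ, 1 ≤ n → ∀ u v : ℝ, 0 ≤ u → u < v → v ≤ 1 →
      1 / (K * n) ≤ v - u → ∃ i ∈ Finset.Icc 1 n, x i ∈ Set.Ioo u v) :
    ∀ n : ℕ, 1 ≤ n → 1 ≤ K * n * (ε / (4 * L)) ^ (1 / β) →
      ε ^ 2 * K * n * (ε / (4 * L)) ^ (1 / β) / 8 ≤
        ∑ i ∈ Finset.Icc 1 n, h (x i) ^ 2 :=
  misfit_lower_bound_general β L K ε hβ hL hK hε hΔx h hcont hhold hsup x hdesign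
end

section
/- Let λ ∈ (0,1) and e > 0 satisfy either (i) λ ≤ 1/2 and e > −1 + 2√2·√(1 − λ), or (ii) λ > 1/2 and e > 2 − 2λ. Then there exists p > 1 such that, setting q = p/(p − 1), the following hold simultaneously: λ·p < 2; (1 − λ)·q < e; e·(p − 1) + (λ − 1)·p > 0; and ((p − 2)/(2(p − 1)))·( 1 + (p − 1)/( e·(p − 1) + (λ − 1)·p ) ) < max( 1, e/(2 − 2λ) ). -/
/-!
Write `t = p - 1` and `E = e t + (λ - 1) p`. For `p > 1` the condition `(1 - λ) q < e` is the
same as `E > 0`, and the last inequality follows from `(p - 1)(p - 2) < p E`, i.e. from the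
positivity of the quadratic `(e + λ - 2) t² + (e + 2λ - 1) t + (λ - 1)`, whose discriminant
is `(e + 1)² - 8(1 - λ)`. If `e > 2 - 2λ`, the exponent `p = 2` works. Otherwise we are in
case (i), where the hypothesis on `e` says precisely that the discriminant is positive, and we
take `t` to be the vertex of the quadratic.
-/

open Real

def FeasibleExponent (lam e p : ℝ) : Prop :=
  1 < p ∧
    lam * p < 2 ∧
    (1 - lam) * (p / (p - 1)) < e ∧
    0 < e * (p - 1) + (lam - 1) * p ∧
    (p - 2) / (2 * (p - 1)) * (1 + (p - 1) / (e * (p - 1) + (lam - 1) * p))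
      < max 1 (e / (2 - 2 * lam))

theorem quadratic_pos_of_two_mul_add_eq_zero {a b c x : ℝ} (ha : a < 0)
    (hd : 0 < discrim a b c) (hx : 2 * a * x + b = 0) : 0 < a * (x * x) + b * x + c := by
  have h : discrim a b c = -4 * a * (a * (x * x) + b * x + c) := by
    rw [discrim, eq_neg_of_add_eq_zero_right hx]
    ring
  exact (mul_pos_iff_of_pos_left (by linarith)).1 (h ▸ hd)

theorem eight_mul_lt_sq_of_two_mul_sqrt_two_mul_sqrt_lt {μ x : ℝ} (hμ : 0 ≤ μ)
    (h : 2 * √2 * √μ < x) : 8 * μ < x ^ 2 := by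
  have hsq : (2 * √2 * √μ) ^ 2 = 8 * μ := by
    rw [mul_pow, mul_pow, sq_sqrt zero_le_two, sq_sqrt hμ]
    norm_num
  exact hsq ▸ pow_lt_pow_left₀ h (by positivity) two_ne_zero

theorem one_sub_mul_div_sub_one_lt_iff {lam e p : ℝ} (hp : 1 < p) :
    (1 - lam) * (p / (p - 1)) < e ↔ 0 < e * (p - 1) + (lam - 1) * p := by
  rw [← mul_div_assoc, div_lt_iff₀ (sub_pos.2 hp), ← sub_pos]
  ring_nf

theorem sub_two_div_mul_one_add_div_lt_one {p E : ℝ} (hp : 1 < p) (hE : 0 < E)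
    (h : (p - 1) * (p - 2) < p * E) : (p - 2) / (2 * (p - 1)) * (1 + (p - 1) / E) < 1 := by
  have hp' : 0 < p - 1 := sub_pos.2 hp
  rw [one_add_div hE.ne', div_mul_div_comm, div_lt_one (by positivity)]
  linarith

section

variable {lam e : ℝ}

theorem FeasibleExponent.of_lt_mul {p : ℝ} (hp : 1 < p) (hlam : lam * p < 2)
    (hE : 0 < e * (p - 1) + (lam - 1) * p)
    (h : (p - 1) * (p - 2) < p * (e * (p - 1) + (lam - 1) * p)) :
    FeasibleExponent lam e p :=
  ⟨hp, hlam, (one_sub_mul_div_sub_one_lt_iff hp).2 hE, hE,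
    lt_max_of_lt_left (sub_two_div_mul_one_add_div_lt_one hp hE h)⟩

theorem feasibleExponent_two (hlam : lam < 1) (he : 2 - 2 * lam < e) :
    FeasibleExponent lam e 2 :=
  FeasibleExponent.of_lt_mul one_lt_two (by linarith) (by linarith) (by linarith)

theorem feasibleExponent_vertex (hlam : 0 < lam) (hhalf : lam ≤ 1 / 2) (he : 0 < e)
    (he' : e ≤ 2 - 2 * lam) (hdisc : 8 * (1 - lam) < (e + 1) ^ 2) :
    FeasibleExponent lam e (1 + (e + 2 * lam - 1) / (2 * (2 - lam - e))) := by
  set t := (e + 2 * lam - 1) / (2 * (2 - lam - e)) with ht_def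
  have hden : 0 < 2 * (2 - lam - e) := by linarith
  have hden' : 2 - lam - e ≠ 0 := by linarith
  have hnum : 0 < e + 2 * lam - 1 := by nlinarith
  have ht : 0 < t := div_pos hnum hden
  have hlam_t : lam * t < 2 - lam := by
    rw [ht_def, ← mul_div_assoc, div_lt_iff₀ hden]
    nlinarith
  have hE_eq : e * (1 + t - 1) + (lam - 1) * (1 + t)
      = (e ^ 2 + lam * e + 3 * lam - 3) / (2 * (2 - lam - e)) := by
    rw [ht_def]
    field_simp
    ring
  have hQ : 0 < (e + lam - 2) * (t * t) + (e + 2 * lam - 1) * t + (lam - 1) := by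
    refine quadratic_pos_of_two_mul_add_eq_zero (by linarith) ?_ ?_
    · rw [discrim]
      linarith
    · rw [ht_def]
      field_simp
      ring
  refine FeasibleExponent.of_lt_mul (by linarith) (by linarith) ?_ (by linarith [hQ])
  rw [hE_eq]
  refine div_pos ?_ hden
  nlinarith [mul_nonneg (by linarith : 0 ≤ 2 - 2 * lam - e) (by linarith : 0 ≤ 2 - lam),
    mul_nonneg hlam.le (by linarith : 0 ≤ 1 - 2 * lam)]

end

/-- Feasibility of the Hölder/Young exponent in the posterior consistency
corollary for the small noise limit: under either `λ ≤ 1/2` and `e > -1 + 2√2·√(1-λ)`, or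
`λ > 1/2` and `e > 2 - 2λ`, there exists `p > 1` with conjugate `q = p/(p-1)` such that
`λp < 2`, `(1-λ)q < e`, `e(p-1) + (λ-1)p > 0`, and
`((p-2)/(2(p-1)))·(1 + (p-1)/(e(p-1)+(λ-1)p)) < max(1, e/(2-2λ))`. -/
theorem exponent_feasibility
    (lam e : ℝ) (hlam : lam ∈ Set.Ioo (0 : ℝ) 1) (he : 0 < e)
    (hcase : (lam ≤ 1 / 2 ∧ -1 + 2 * Real.sqrt 2 * Real.sqrt (1 - lam) < e)
      ∨ (1 / 2 < lam ∧ 2 - 2 * lam < e)) :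
    ∃ p : ℝ, 1 < p ∧
      lam * p < 2 ∧
      (1 - lam) * (p / (p - 1)) < e ∧
      0 < e * (p - 1) + (lam - 1) * p ∧
      (p - 2) / (2 * (p - 1)) * (1 + (p - 1) / (e * (p - 1) + (lam - 1) * p))
        < max 1 (e / (2 - 2 * lam)) := by
  obtain ⟨hlam0, hlam1⟩ := hlam
  rcases lt_or_ge (2 - 2 * lam) e with hbig | hsmall
  · exact ⟨2, feasibleExponent_two hlam1 hbig⟩
  · obtain ⟨hhalf, hsqrt⟩ := hcase.resolve_right fun h => hsmall.not_gt h.2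
    have hdisc : 8 * (1 - lam) < (e + 1) ^ 2 :=
      eight_mul_lt_sq_of_two_mul_sqrt_two_mul_sqrt_lt (by linarith) (by linarith)
    exact ⟨_, feasibleExponent_vertex hlam0 hhalf he hsmall hdisc⟩
end
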